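/- Let H be a group with finite symmetric generating set S whose word metric is δ-hyperbolic. For any κ ≥ 0 there exists a constant M > 0, depending only on κ, H, S and δ, such that if h ∈ H is κ-almost conjugacy minimal, then there exist an element c ∈ H with |c| ≤ M and a conjugacy minimal element u in the conjugacy class of h such that h = c⁻¹uc. -/

import Mathlib

open Set

/-- The word length of `h` with respect to the generating set `S`: the least `n` such
that `h` is a product of `n` elements of `S`. -/
noncomputable def wordLength {H : Type*} [Group H] (S : Set H) (h : H) : ℕ :=
  sInf {n | ∃ l : List H, l.length = n ∧ (∀ x ∈ l, x ∈ S) ∧ l.prod = h}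

/-- The word metric: `d(a,b) = |a⁻¹ b|`. -/
noncomputable def wordDist {H : Type*} [Group H] (S : Set H) (a b : H) : ℕ :=
  wordLength S (a⁻¹ * b)

/-- `g : {0,…,n} → H` is a discrete geodesic (of length `n`) in the word metric:
`d(g i, g j) = |i − j|` for all `i, j ≤ n`. -/
def IsDiscreteGeodesic {H : Type*} [Group H] (S : Set H) (g : ℕ → H) (n : ℕ) : Prop :=
  ∀ i j : ℕ, i ≤ j → j ≤ n → wordDist S (g i) (g j) = j - i

/-- The Gromov product `(x,y)_z = ½(d(x,z) + d(y,z) − d(x,y))` in the word metric. -/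
noncomputable def gromovProd {H : Type*} [Group H] (S : Set H) (x y z : H) : ℝ :=
  ((wordDist S x z : ℝ) + (wordDist S y z : ℝ) - (wordDist S x y : ℝ)) / 2

/-- The word metric of `(H,S)` is `δ`-hyperbolic: geodesic triangles in the Cayley graph
are `δ`-thin, i.e. for any `x, y, z`, any discrete geodesics `f` from `z` to `x` and `g`
from `z` to `y`, and any `i` with `i ≤ (x,y)_z`, one has `d(f i, g i) ≤ δ`. -/
def WordHyperbolic {H : Type*} [Group H] (S : Set H) (δ : ℝ) : Prop :=
  ∀ (x y z : H) (f g : ℕ → H),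
    f 0 = z → f (wordDist S z x) = x → IsDiscreteGeodesic S f (wordDist S z x) →
    g 0 = z → g (wordDist S z y) = y → IsDiscreteGeodesic S g (wordDist S z y) →
    ∀ i : ℕ, i ≤ wordDist S z x → i ≤ wordDist S z y →
      (i : ℝ) ≤ gromovProd S x y z →
      (wordDist S (f i) (g i) : ℝ) ≤ δ

/-- `h` is `κ`-almost conjugacy minimal: `|h| ≤ |h'| + κ` for every conjugate `h'` of
`h` in `H`. -/
def AlmostConjMin {H : Type*} [Group H] (S : Set H) (κ : ℝ) (h : H) : Prop :=
  ∀ g : H, (wordLength S h : ℝ) ≤ (wordLength S (g⁻¹ * h * g) : ℝ) + κ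

/-- `h` is conjugacy minimal: `|h| ≤ |h'|` for every conjugate `h'` of `h` in `H`. -/
def ConjMin {H : Type*} [Group H] (S : Set H) (h : H) : Prop :=
  ∀ g : H, wordLength S h ≤ wordLength S (g⁻¹ * h * g)

/-!
Write `u = c h c⁻¹` with `u` conjugacy minimal and `c` as short as possible. Minimality of `c` makes
the geodesics from `1` to `c` and to `u` diverge at once, so `(c, u)_1 < δ + 1`, and likewise (using
`u⁻¹`) at the corner `u` of the quadrilateral `c, 1, u, uc`. When `|u| ≥ 3δ + 3`, the four-point
condition at `u` then makes the fourth side nearly as long as the other three together: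
`|h| = d(c, uc) > 2|c| + |u| - 6δ - 6`, and `|h| ≤ |u| + κ` bounds `|c|`. When `|u| < 3δ + 3`, `h` lies
in a ball of fixed radius, which is finite since `S` is, so `|c|` is bounded there as well.
-/
section WordLength

variable {H : Type*} [Group H] {S : Set H}

lemma wordLength_le_length {l : List H} (hl : ∀ x ∈ l, x ∈ S) :
    wordLength S l.prod ≤ l.length :=
  Nat.sInf_le ⟨l, rfl, hl, rfl⟩

@[simp]
lemma wordDist_one_left (x : H) : wordDist S 1 x = wordLength S x := by
  simp [wordDist]

lemma wordDist_mul_left (g a b : H) : wordDist S (g * a) (g * b) = wordDist S a b := by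
  simp [wordDist, mul_assoc]

variable (hSsym : ∀ s ∈ S, s⁻¹ ∈ S) (hSgen : Subgroup.closure S = ⊤)
include hSsym hSgen

lemma exists_minimal_word (h : H) :
    ∃ l : List H, l.length = wordLength S h ∧ (∀ x ∈ l, x ∈ S) ∧ l.prod = h := by
  refine Nat.sInf_mem (s := {n | ∃ l : List H, l.length = n ∧ (∀ x ∈ l, x ∈ S) ∧ l.prod = h}) ?_
  have hmem : h ∈ Submonoid.closure (S ∪ S⁻¹) := by
    rw [← Subgroup.closure_toSubmonoid, hSgen]; trivial
  obtain ⟨l, hl, rfl⟩ := Submonoid.exists_list_of_mem_closure hmem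
  refine ⟨l.length, l, rfl, fun x hx => ?_, rfl⟩
  rcases hl x hx with hx | hx
  · exact hx
  · simpa using hSsym _ hx

lemma wordLength_mul_le (a b : H) : wordLength S (a * b) ≤ wordLength S a + wordLength S b := by
  obtain ⟨la, hla, ha, rfl⟩ := exists_minimal_word hSsym hSgen a
  obtain ⟨lb, hlb, hb, rfl⟩ := exists_minimal_word hSsym hSgen b
  rw [← hla, ← hlb, ← List.length_append, ← List.prod_append]
  exact wordLength_le_length fun x hx => (List.mem_append.1 hx).elim (ha x) (hb x)

lemma wordLength_inv (a : H) : wordLength S a⁻¹ = wordLength S a := by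
  suffices key : ∀ x : H, wordLength S x⁻¹ ≤ wordLength S x from
    le_antisymm (key a) (by simpa using key a⁻¹)
  intro x
  obtain ⟨l, hl, hS, rfl⟩ := exists_minimal_word hSsym hSgen x
  rw [← hl, List.prod_inv_reverse]
  refine (wordLength_le_length fun y hy => ?_).trans_eq (by simp)
  obtain ⟨z, hz, rfl⟩ := List.mem_map.1 (List.mem_reverse.1 hy)
  exact hSsym z (hS z hz)

lemma wordDist_comm (a b : H) : wordDist S a b = wordDist S b a := by
  rw [wordDist, ← wordLength_inv hSsym hSgen, mul_inv_rev, inv_inv, wordDist]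

lemma wordDist_triangle (a b c : H) : wordDist S a c ≤ wordDist S a b + wordDist S b c := by
  simpa [wordDist, mul_assoc] using wordLength_mul_le hSsym hSgen (a⁻¹ * b) (b⁻¹ * c)

lemma finite_setOf_wordLength_le (hSfin : S.Finite) (k : ℕ) :
    {x : H | wordLength S x ≤ k}.Finite := by
  have : Finite S := hSfin.to_subtype
  refine ((List.finite_length_le S k).image fun l => (l.map (↑)).prod).subset ?_
  intro x hx
  obtain ⟨l, hlen, hl, rfl⟩ := exists_minimal_word hSsym hSgen x
  lift l to List S using hl
  exact ⟨l, by simpa using hlen.trans_le hx, rfl⟩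

end WordLength

section Geodesic

variable {H : Type*} [Group H] {S : Set H}

def IsGeodesicBetween (S : Set H) (f : ℕ → H) (z x : H) : Prop :=
  f 0 = z ∧ f (wordDist S z x) = x ∧ IsDiscreteGeodesic S f (wordDist S z x)

lemma IsGeodesicBetween.wordDist_start {f : ℕ → H} {z x : H} (hf : IsGeodesicBetween S f z x)
    {i : ℕ} (hi : i ≤ wordDist S z x) : wordDist S z (f i) = i := by
  simpa [hf.1] using hf.2.2 0 i i.zero_le hi

lemma IsGeodesicBetween.add_wordDist_end {f : ℕ → H} {z x : H}
    (hf : IsGeodesicBetween S f z x) {i : ℕ} (hi : i ≤ wordDist S z x) :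
    i + wordDist S (f i) x = wordDist S z x := by
  have := hf.2.2 i _ hi le_rfl
  rw [hf.2.1] at this
  omega

lemma wordDist_prod_take_le {l : List H} (hl : ∀ x ∈ l, x ∈ S) {i j : ℕ} (hij : i ≤ j) :
    wordDist S (l.take i).prod (l.take j).prod ≤ j - i := by
  have hsplit : (l.take j).prod = (l.take i).prod * ((l.take j).drop i).prod := by
    nth_rewrite 1 [← List.take_append_drop i (l.take j)]
    rw [List.take_take, min_eq_left hij, List.prod_append]
  rw [wordDist, hsplit, inv_mul_cancel_left]
  refine (wordLength_le_length fun x hx => hl x ?_).trans ?_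
  · exact List.mem_of_mem_take (List.mem_of_mem_drop hx)
  · simp only [List.length_drop, List.length_take]
    omega

variable (hSsym : ∀ s ∈ S, s⁻¹ ∈ S) (hSgen : Subgroup.closure S = ⊤)
include hSsym hSgen

lemma isDiscreteGeodesic_of_wordDist_le {f : ℕ → H} {n : ℕ}
    (hle : ∀ i j, i ≤ j → j ≤ n → wordDist S (f i) (f j) ≤ j - i)
    (hn : wordDist S (f 0) (f n) = n) : IsDiscreteGeodesic S f n := by
  intro i j hij hjn
  have h₁ := wordDist_triangle hSsym hSgen (f 0) (f i) (f n)
  have h₂ := wordDist_triangle hSsym hSgen (f i) (f j) (f n)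
  have h₃ := hle 0 i i.zero_le (hij.trans hjn)
  have h₄ := hle j n hjn le_rfl
  have h₅ := hle i j hij hjn
  omega

lemma exists_isGeodesicBetween (z x : H) : ∃ f : ℕ → H, IsGeodesicBetween S f z x := by
  obtain ⟨l, hlen, hl, hprod⟩ := exists_minimal_word hSsym hSgen (z⁻¹ * x)
  have hle : ∀ i j, i ≤ j → wordDist S (z * (l.take i).prod) (z * (l.take j).prod) ≤ j - i :=
    fun i j hij => (wordDist_mul_left z _ _).trans_le (wordDist_prod_take_le hl hij)
  have hend : z * (l.take (wordDist S z x)).prod = x := by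
    rw [wordDist, ← hlen, List.take_length, hprod, mul_inv_cancel_left]
  refine ⟨fun i => z * (l.take i).prod, by simp, hend,
    isDiscreteGeodesic_of_wordDist_le hSsym hSgen (fun i j hij _ => hle i j hij) ?_⟩
  simp only [List.take_zero, List.prod_nil, mul_one, hend]

end Geodesic

section GromovProduct

variable {H : Type*} [Group H] {S : Set H} {δ : ℝ}

variable (hSsym : ∀ s ∈ S, s⁻¹ ∈ S) (hSgen : Subgroup.closure S = ⊤)
include hSsym hSgen

lemma gromovProd_nonneg (x y z : H) : 0 ≤ gromovProd S x y z := by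
  have h := wordDist_triangle hSsym hSgen x z y
  rw [wordDist_comm hSsym hSgen z y] at h
  rw [gromovProd]
  have : (wordDist S x y : ℝ) ≤ wordDist S x z + wordDist S y z := by exact_mod_cast h
  linarith

lemma gromovProd_le_wordDist_left (x y z : H) : gromovProd S x y z ≤ wordDist S z x := by
  have h := wordDist_triangle hSsym hSgen y x z
  rw [wordDist_comm hSsym hSgen y x] at h
  rw [gromovProd, wordDist_comm hSsym hSgen z x]
  have : (wordDist S y z : ℝ) ≤ wordDist S x y + wordDist S x z := by exact_mod_cast h
  linarith

lemma gromovProd_le_wordDist_right (x y z : H) : gromovProd S x y z ≤ wordDist S z y := by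
  have h := wordDist_triangle hSsym hSgen x y z
  rw [gromovProd, wordDist_comm hSsym hSgen z y]
  have : (wordDist S x z : ℝ) ≤ wordDist S x y + wordDist S y z := by exact_mod_cast h
  linarith

lemma WordHyperbolic.wordDist_le (hhyp : WordHyperbolic S δ) {f g : ℕ → H} {x y z : H}
    (hf : IsGeodesicBetween S f z x) (hg : IsGeodesicBetween S g z y) {i : ℕ}
    (hi : (i : ℝ) ≤ gromovProd S x y z) : (wordDist S (f i) (g i) : ℝ) ≤ δ :=
  hhyp x y z f g hf.1 hf.2.1 hf.2.2 hg.1 hg.2.1 hg.2.2 i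
    (by exact_mod_cast hi.trans (gromovProd_le_wordDist_left hSsym hSgen x y z))
    (by exact_mod_cast hi.trans (gromovProd_le_wordDist_right hSsym hSgen x y z)) hi

/-- The four-point condition; the loss `δ + 1` comes from thinness and from rounding the Gromov
product down to an integer. -/
lemma WordHyperbolic.min_gromovProd_sub_le (hhyp : WordHyperbolic S δ) (w x y z : H) :
    min (gromovProd S x z w) (gromovProd S z y w) - (δ + 1) ≤ gromovProd S x y w := by
  set P := min (gromovProd S x z w) (gromovProd S z y w)
  have hP : 0 ≤ P := le_min (gromovProd_nonneg hSsym hSgen x z w)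
    (gromovProd_nonneg hSsym hSgen z y w)
  set i := ⌊P⌋₊
  have hiP : (i : ℝ) ≤ P := Nat.floor_le hP
  have hPi : P < i + 1 := Nat.lt_floor_add_one P
  have hixz : (i : ℝ) ≤ gromovProd S x z w := hiP.trans (min_le_left _ _)
  have hizy : (i : ℝ) ≤ gromovProd S z y w := hiP.trans (min_le_right _ _)
  obtain ⟨fx, hfx⟩ := exists_isGeodesicBetween hSsym hSgen w x
  obtain ⟨fy, hfy⟩ := exists_isGeodesicBetween hSsym hSgen w y
  obtain ⟨fz, hfz⟩ := exists_isGeodesicBetween hSsym hSgen w z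
  have hxz := hhyp.wordDist_le hSsym hSgen hfx hfz hixz
  have hzy := hhyp.wordDist_le hSsym hSgen hfz hfy hizy
  have hx : (i : ℝ) + wordDist S (fx i) x = wordDist S w x := by
    exact_mod_cast hfx.add_wordDist_end
      (by exact_mod_cast hixz.trans (gromovProd_le_wordDist_left hSsym hSgen x z w))
  have hy : (i : ℝ) + wordDist S (fy i) y = wordDist S w y := by
    exact_mod_cast hfy.add_wordDist_end
      (by exact_mod_cast hizy.trans (gromovProd_le_wordDist_right hSsym hSgen z y w))
  have hpath : (wordDist S x y : ℝ) ≤ wordDist S (fx i) x + wordDist S (fx i) (fz i) +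
      wordDist S (fz i) (fy i) + wordDist S (fy i) y := by
    have h₁ := wordDist_triangle hSsym hSgen x (fx i) (fz i)
    have h₂ := wordDist_triangle hSsym hSgen x (fz i) (fy i)
    have h₃ := wordDist_triangle hSsym hSgen x (fy i) y
    rw [wordDist_comm hSsym hSgen x (fx i)] at h₁
    exact_mod_cast (by omega : wordDist S x y ≤ wordDist S (fx i) x +
      wordDist S (fx i) (fz i) + wordDist S (fz i) (fy i) + wordDist S (fy i) y)
  rw [gromovProd, wordDist_comm hSsym hSgen x w, wordDist_comm hSsym hSgen y w]
  linarith

end GromovProduct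

section Conjugacy

variable {H : Type*} [Group H] {S : Set H}

lemma exists_conjMin_conj (h : H) : ∃ c : H, ConjMin S (c * h * c⁻¹) := by
  obtain ⟨g, -, hg⟩ := exists_minimalFor_of_wellFoundedLT (fun _ => True)
    (fun g : H => wordLength S (g⁻¹ * h * g)) ⟨1, trivial⟩
  refine ⟨g⁻¹, fun g' => ?_⟩
  rw [inv_inv, show g'⁻¹ * (g⁻¹ * h * g) * g' = (g * g')⁻¹ * h * (g * g') by group]
  by_contra! hlt
  exact hlt.not_ge (hg trivial hlt.le)

lemma ConjMin.conj_of_wordLength_le {u p : H} (hu : ConjMin S u)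
    (hp : wordLength S (p⁻¹ * u * p) ≤ wordLength S u) : ConjMin S (p⁻¹ * u * p) := by
  intro g
  rw [show g⁻¹ * (p⁻¹ * u * p) * g = (p * g)⁻¹ * u * (p * g) by group]
  exact hp.trans (hu _)

lemma ConjMin.inv (hSsym : ∀ s ∈ S, s⁻¹ ∈ S) (hSgen : Subgroup.closure S = ⊤) {u : H}
    (hu : ConjMin S u) : ConjMin S u⁻¹ := by
  intro g
  rw [show g⁻¹ * u⁻¹ * g = (g⁻¹ * u * g)⁻¹ by group, wordLength_inv hSsym hSgen,
    wordLength_inv hSsym hSgen]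
  exact hu g

lemma MinimalFor.wordLength_le_wordDist
    (hSsym : ∀ s ∈ S, s⁻¹ ∈ S) (hSgen : Subgroup.closure S = ⊤) {h c : H}
    (hc : MinimalFor (fun c => ConjMin S (c * h * c⁻¹)) (wordLength S) c) {p : H}
    (hp : ConjMin S (p⁻¹ * (c * h * c⁻¹) * p)) : wordLength S c ≤ wordDist S c p := by
  have hP : ConjMin S ((p⁻¹ * c) * h * (p⁻¹ * c)⁻¹) := by simpa [mul_assoc] using hp
  rw [wordDist, ← wordLength_inv hSsym hSgen (c⁻¹ * p), mul_inv_rev, inv_inv]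
  by_contra! hlt
  exact hlt.not_ge (hc.2 hP hlt.le)

end Conjugacy

section Quadrilateral

variable {H : Type*} [Group H] {S : Set H} {δ : ℝ}
variable (hSsym : ∀ s ∈ S, s⁻¹ ∈ S) (hSgen : Subgroup.closure S = ⊤) (hhyp : WordHyperbolic S δ)
include hSsym hSgen hhyp

/-- `hc` says that `1` is a point nearest to `c` among the `p` with `p⁻¹ u p` conjugacy minimal.
Were `(c, u)_1 ≥ δ + 1`, the point at distance `⌊(c, u)_1⌋` from `1` towards `u` would be such a `p`,
closer to `c` than `1` is, because the geodesics towards `c` and `u` are still `δ`-close there. -/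
lemma gromovProd_lt_of_forall_conjMin {u c : H} (hu : ConjMin S u)
    (hc : ∀ p, ConjMin S (p⁻¹ * u * p) → wordLength S c ≤ wordDist S c p) :
    gromovProd S c u 1 < δ + 1 := by
  by_contra! hge
  set i := ⌊gromovProd S c u 1⌋₊
  have hi : (i : ℝ) ≤ gromovProd S c u 1 := Nat.floor_le (gromovProd_nonneg hSsym hSgen c u 1)
  have hδi : δ < i := by
    have := Nat.lt_floor_add_one (gromovProd S c u 1)
    linarith
  have hic : i ≤ wordDist S 1 c := by
    exact_mod_cast hi.trans (gromovProd_le_wordDist_left hSsym hSgen c u 1)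
  have hiu : i ≤ wordDist S 1 u := by
    exact_mod_cast hi.trans (gromovProd_le_wordDist_right hSsym hSgen c u 1)
  obtain ⟨f, hf⟩ := exists_isGeodesicBetween hSsym hSgen 1 c
  obtain ⟨g, hg⟩ := exists_isGeodesicBetween hSsym hSgen 1 u
  have hclose := hhyp.wordDist_le hSsym hSgen hf hg hi
  have hmin : ConjMin S ((g i)⁻¹ * u * g i) := by
    refine hu.conj_of_wordLength_le ?_
    have h₁ := wordLength_mul_le hSsym hSgen ((g i)⁻¹ * u) (g i)
    have h₂ := hg.wordDist_start hiu
    have h₃ := hg.add_wordDist_end hiu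
    simp only [wordDist_one_left] at h₂ h₃
    rw [wordDist] at h₃
    omega
  have h₁ := (hc _ hmin).trans (wordDist_triangle hSsym hSgen c (f i) (g i))
  rw [wordDist_comm hSsym hSgen c (f i)] at h₁
  have h₂ : (i : ℝ) + wordDist S (f i) c = wordLength S c := by
    exact_mod_cast (wordDist_one_left (S := S) c) ▸ hf.add_wordDist_end hic
  have h₁' : (wordLength S c : ℝ) ≤ wordDist S (f i) c + wordDist S (f i) (g i) := by
    exact_mod_cast h₁
  linarith

lemma two_mul_wordLength_add_lt {u c : H} (hu : ConjMin S u)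
    (hc : ∀ p, ConjMin S (p⁻¹ * u * p) → wordLength S c ≤ wordDist S c p)
    (hm : 3 * δ + 3 ≤ wordLength S u) :
    2 * (wordLength S c : ℝ) + wordLength S u < wordLength S (c⁻¹ * u * c) + 6 * δ + 6 := by
  have hc' : ∀ p, ConjMin S (p⁻¹ * u⁻¹ * p) → wordLength S c ≤ wordDist S c p :=
    fun p hp => hc p (by simpa [mul_assoc] using hp.inv hSsym hSgen)
  have h₁ := gromovProd_lt_of_forall_conjMin hSsym hSgen hhyp hu hc
  have h₂ := gromovProd_lt_of_forall_conjMin hSsym hSgen hhyp (hu.inv hSsym hSgen) hc'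
  have h₃ := hhyp.min_gromovProd_sub_le hSsym hSgen u 1 (u * c) c
  have hinv : wordLength S (c⁻¹ * u⁻¹) = wordLength S (u * c) := by
    rw [← wordLength_inv hSsym hSgen, mul_inv_rev, inv_inv, inv_inv]
  simp only [gromovProd, wordDist, inv_one, one_mul, mul_one, inv_inv, mul_inv_rev, mul_assoc,
    inv_mul_cancel, wordLength_inv hSsym hSgen, hinv] at h₁ h₂ h₃ ⊢
  rcases min_le_iff.1 (sub_le_iff_le_add.1 h₃) with h | h <;> linarith

end Quadrilateral

theorem stmt7_general {H : Type*} [Group H] (S : Set H) (δ : ℝ)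
    (hSfin : S.Finite) (hSsym : ∀ s ∈ S, s⁻¹ ∈ S) (hSgen : Subgroup.closure S = ⊤)
    (hhyp : WordHyperbolic S δ) :
    ∀ κ : ℝ, 0 ≤ κ → ∃ M : ℝ, 0 < M ∧
      ∀ h : H, AlmostConjMin S κ h →
        ∃ c u : H, (wordLength S c : ℝ) ≤ M ∧ ConjMin S u ∧ h = c⁻¹ * u * c := by
  intro κ _
  choose c hc using fun h : H => exists_minimalFor_of_wellFoundedLT
    (fun c => ConjMin S (c * h * c⁻¹)) (wordLength S) (exists_conjMin_conj h)
  obtain ⟨M₀, hM₀⟩ := ((finite_setOf_wordLength_le hSsym hSgen hSfin ⌈3 * δ + 3 + κ⌉₊).image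
    fun h => (wordLength S (c h) : ℝ)).bddAbove
  refine ⟨max (max M₀ (κ / 2 + 3 * δ + 3)) 1, lt_max_of_lt_right one_pos, fun h hh => ?_⟩
  refine ⟨c h, c h * h * (c h)⁻¹, ?_, (hc h).1, by group⟩
  refine le_max_of_le_left ?_
  have hlen : (wordLength S h : ℝ) ≤ wordLength S (c h * h * (c h)⁻¹) + κ := by
    simpa using hh (c h)⁻¹
  by_cases hm : 3 * δ + 3 ≤ wordLength S (c h * h * (c h)⁻¹)
  · have := two_mul_wordLength_add_lt hSsym hSgen hhyp (hc h).1
      (fun _ hp => (hc h).wordLength_le_wordDist hSsym hSgen hp) hm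
    rw [show (c h)⁻¹ * (c h * h * (c h)⁻¹) * c h = h by group] at this
    exact le_max_of_le_right (by linarith)
  · refine le_max_of_le_left (hM₀ ⟨h, ?_, rfl⟩)
    have := Nat.le_ceil (3 * δ + 3 + κ)
    exact_mod_cast (show (wordLength S h : ℝ) ≤ ⌈3 * δ + 3 + κ⌉₊ by linarith)

/-- Let `H` be a group with finite symmetric generating set `S` whose
word metric is `δ`-hyperbolic. For any `κ ≥ 0` there is `M > 0`, depending only on `κ`,
`H`, `S`, `δ`, such that every `κ`-almost conjugacy minimal `h ∈ H` can be written as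
`h = c⁻¹uc` with `|c| ≤ M` and `u` a conjugacy minimal element of the conjugacy class of
`h`. -/
theorem stmt7 {H : Type*} [Group H] (S : Set H) (δ : ℝ)
    (hSfin : S.Finite) (hSsym : ∀ s ∈ S, s⁻¹ ∈ S) (hSgen : Subgroup.closure S = ⊤)
    (hδ : 0 ≤ δ) (hhyp : WordHyperbolic S δ) :
    ∀ κ : ℝ, 0 ≤ κ → ∃ M : ℝ, 0 < M ∧
      ∀ h : H, AlmostConjMin S κ h →
        ∃ c u : H, (wordLength S c : ℝ) ≤ M ∧ ConjMin S u ∧ h = c⁻¹ * u * c :=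
  stmt7_general S δ hSfin hSsym hSgen hhyp
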